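/- Let p and q be odd primes with q dividing R_p = (10^p - 1)/9. Then for every integer n ≥ 0, q^{n+1} divides R_{p·q^n}. -/
import Mathlib


def repunit (n : ℕ) : ℕ := (10 ^ n - 1) / 9

lemma sub_one_mul_geom (x k : ℕ) (hx : 1 ≤ x) :
    (x - 1) * ∑ i ∈ Finset.range k, x ^ i = x ^ k - 1 := by
  induction k with
  | zero => simp
  | succ k ih =>
    rw [Finset.sum_range_succ, Nat.mul_add, ih, pow_succ, Nat.sub_mul, one_mul]
    have h1 : 1 ≤ x ^ k := Nat.one_le_pow _ _ hx
    have h2 : x ^ k ≤ x * x ^ k := Nat.le_mul_of_pos_left _ hx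
    have : x * x ^ k = x ^ k * x := by ring
    omega

lemma nine_dvd (m : ℕ) : 9 ∣ 10 ^ m - 1 := by
  have := Nat.sub_dvd_pow_sub_pow 10 1 m
  simpa using this

lemma nine_mul_repunit (m : ℕ) : 9 * repunit m = 10 ^ m - 1 :=
  Nat.mul_div_cancel' (nine_dvd m)

lemma repunit_mul (m k : ℕ) :
    repunit (m * k) = repunit m * ∑ i ∈ Finset.range k, (10 ^ m) ^ i := by
  have hx : 1 ≤ (10:ℕ) ^ m := Nat.one_le_pow _ _ (by norm_num)
  have h := sub_one_mul_geom (10 ^ m) k hx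
  rw [← pow_mul] at h
  unfold repunit
  rw [← h, Nat.mul_comm (10 ^ m - 1), Nat.mul_div_assoc _ (nine_dvd m),
    Nat.mul_comm]

lemma step (q m k : ℕ) (hq : 0 < q) (hdvd : q ∣ 10 ^ m - 1)
    (h : q ^ k ∣ repunit m) : q ^ (k + 1) ∣ repunit (m * q) := by
  rw [repunit_mul, pow_succ]
  apply mul_dvd_mul h
  have hx : 1 ≤ (10:ℕ) ^ m := Nat.one_le_pow _ _ (by norm_num)
  have hmod : (10:ℕ) ^ m ≡ 1 [MOD q] :=
    ((Nat.modEq_iff_dvd' hx).mpr hdvd).symm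
  haveI : NeZero q := ⟨hq.ne'⟩
  have hcast : ((10 ^ m : ℕ) : ZMod q) = ((1 : ℕ) : ZMod q) :=
    (ZMod.natCast_eq_natCast_iff _ _ _).mpr hmod
  have : (((∑ i ∈ Finset.range q, (10 ^ m) ^ i : ℕ)) : ZMod q) = 0 := by
    push_cast at hcast ⊢
    rw [hcast]
    simp [Finset.sum_const, ZMod.natCast_self]
  exact (ZMod.natCast_eq_zero_iff _ _).mp this

theorem pow_dvd_repunit_mul_pow (p q : ℕ) (hp : p.Prime) (hpo : Odd p)
    (hq : q.Prime) (hqo : Odd q) (h1 : q ∣ repunit p) :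
    ∀ n : ℕ, q ^ (n + 1) ∣ repunit (p * q ^ n) := by
  have hq10 : q ∣ 10 ^ p - 1 := by
    rw [← nine_mul_repunit]
    exact h1.mul_left 9
  intro n
  induction n with
  | zero => simpa using h1
  | succ n ih =>
    have hdvd : q ∣ 10 ^ (p * q ^ n) - 1 := by
      refine hq10.trans ?_
      have := Nat.sub_dvd_pow_sub_pow (10 ^ p) 1 (q ^ n)
      rwa [← pow_mul, one_pow] at this
    have := step q (p * q ^ n) (n + 1) hq.pos hdvd ih
    rwa [show p * q ^ n * q = p * q ^ (n + 1) by ring] at this
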